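/- arXiv:math-ph/0008003 — 2 statements merged into one kernel-verified Lean document; each statement's English description precedes it below -/
import Mathlib

section
/- Two rings R and S are isomorphic objects in the bicategory of rings and bimodules — i.e., there exist an (R,S)-bimodule M and an (S,R)-bimodule N together with an (R,R)-bimodule isomorphism M ⊗[S] N ≅ R and an (S,S)-bimodule isomorphism N ⊗[R] M ≅ S — if and only if there is an additive equivalence between the category of left R-modules and the category of left S-modules. -/
/-!
Given a Morita context, `N ⊗[R] -` and `M ⊗[S] -` are mutually inverse: the map
`M ⊗[S] (N ⊗[R] X) → X`, `m ⊗ n ⊗ x ↦ e(m ⊗ n) • x`, has inverse `x ↦ e⁻¹(1) ⊗ x`, because the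
`(R,R)`-bimodule structure of `M ⊗[S] N ≅ R` forces `u • e(v) = e(u) • v`.

Conversely, let `F : R-Mod ≌ S-Mod` be additive with inverse `G`. Through `G`, the ring
`Sᵐᵒᵖ ≅ End_S(S)` acts on `M = G(S)`, and likewise `Rᵐᵒᵖ` acts on `N = F(R)`. The map
`M ⊗[S] Y → G(Y)`, `m ⊗ y ↦ G(s ↦ s • y)(m)`, is an isomorphism: its inverse is the transpose,
under `G ⊣ F`, of `y ↦ F(m ↦ m ⊗ y)(ε⁻¹ 1)`. For `Y = F(R)` this gives
`M ⊗[S] N ≅ G(F(R)) ≅ R`, and symmetrically `N ⊗[R] M ≅ S`.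
-/

open scoped TensorProduct
open MulOpposite

namespace Paper

noncomputable section

/-- The subgroup of relators defining the balanced tensor product `M ⊗[S] N`
of a right `S`-module `M` and a left `S`-module `N`. -/
def balRel (S : Type*) [Ring S] (M : Type*) [AddCommGroup M] [Module Sᵐᵒᵖ M]
    (N : Type*) [AddCommGroup N] [Module S N] : AddSubgroup (M ⊗[ℤ] N) :=
  AddSubgroup.closure
    {x | ∃ (m : M) (s : S) (n : N), x = (op s • m) ⊗ₜ[ℤ] n - m ⊗ₜ[ℤ] (s • n)}

/-- The balanced tensor product `M ⊗[S] N` of a right `S`-module `M` and a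
left `S`-module `N`: the quotient of the tensor product `M ⊗[ℤ] N` of abelian
groups by the relations `(m • s) ⊗ n = m ⊗ (s • n)`. -/
def BalTensor (S : Type*) [Ring S] (M : Type*) [AddCommGroup M] [Module Sᵐᵒᵖ M]
    (N : Type*) [AddCommGroup N] [Module S N] : Type _ :=
  (M ⊗[ℤ] N) ⧸ balRel S M N

instance (S : Type*) [Ring S] (M : Type*) [AddCommGroup M] [Module Sᵐᵒᵖ M]
    (N : Type*) [AddCommGroup N] [Module S N] : AddCommGroup (BalTensor S M N) :=
  QuotientAddGroup.Quotient.addCommGroup _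

/-- The elementary tensor `m ⊗ n` in the balanced tensor product `M ⊗[S] N`. -/
def BalTensor.tmul (S : Type*) [Ring S] (M : Type*) [AddCommGroup M] [Module Sᵐᵒᵖ M]
    (N : Type*) [AddCommGroup N] [Module S N] (m : M) (n : N) : BalTensor S M N :=
  QuotientAddGroup.mk (m ⊗ₜ[ℤ] n)


/-- The canonical projection onto the balanced tensor product. -/
def BalTensor.mk (S : Type*) [Ring S] (M : Type*) [AddCommGroup M] [Module Sᵐᵒᵖ M]
    (N : Type*) [AddCommGroup N] [Module S N] (x : M ⊗[ℤ] N) : BalTensor S M N :=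
  QuotientAddGroup.mk x

/-- The left action of `r : R` on `M ⊗[ℤ] N` through the first factor. -/
def lsmulAux (R : Type*) [Ring R] (M : Type*) [AddCommGroup M] [Module R M]
    (N : Type*) [AddCommGroup N] (r : R) : M ⊗[ℤ] N →+ M ⊗[ℤ] N :=
  (LinearMap.rTensor N ((DistribMulAction.toAddMonoidHom M r).toIntLinearMap)).toAddMonoidHom

/-- The right action of `t : Tᵐᵒᵖ` on `M ⊗[ℤ] N` through the second factor. -/
def rsmulAux (T : Type*) [Ring T] (M : Type*) [AddCommGroup M]
    (N : Type*) [AddCommGroup N] [Module Tᵐᵒᵖ N] (t : Tᵐᵒᵖ) : M ⊗[ℤ] N →+ M ⊗[ℤ] N :=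
  (LinearMap.lTensor M ((DistribMulAction.toAddMonoidHom N t).toIntLinearMap)).toAddMonoidHom

section LeftAction

variable (R S : Type*) [Ring R] [Ring S]
  (M : Type*) [AddCommGroup M] [Module R M] [Module Sᵐᵒᵖ M] [SMulCommClass R Sᵐᵒᵖ M]
  (N : Type*) [AddCommGroup N] [Module S N]

theorem lsmulAux_le (r : R) :
    balRel S M N ≤ (balRel S M N).comap (lsmulAux R M N r) := by
  rw [balRel, AddSubgroup.closure_le]
  rintro x ⟨m, s, n, rfl⟩
  simp only [SetLike.mem_coe, AddSubgroup.mem_comap, map_sub]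
  have h1 : lsmulAux R M N r ((op s • m) ⊗ₜ[ℤ] n) = (op s • (r • m)) ⊗ₜ[ℤ] n := by
    simp [lsmulAux, LinearMap.rTensor_tmul, smul_comm]
  have h2 : lsmulAux R M N r (m ⊗ₜ[ℤ] (s • n)) = (r • m) ⊗ₜ[ℤ] (s • n) := by
    simp [lsmulAux, LinearMap.rTensor_tmul]
  rw [h1, h2]
  exact AddSubgroup.subset_closure ⟨r • m, s, n, rfl⟩

instance : SMul R (BalTensor S M N) :=
  ⟨fun r => QuotientAddGroup.map _ _ (lsmulAux R M N r) (lsmulAux_le R S M N r)⟩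

theorem BalTensor.lsmul_mk (r : R) (x : M ⊗[ℤ] N) :
    r • (BalTensor.mk S M N x) = BalTensor.mk S M N (lsmulAux R M N r x) := rfl

instance : Module R (BalTensor S M N) where
  smul r x := r • x
  one_smul x := by
    induction x using QuotientAddGroup.induction_on with
    | H y =>
      show QuotientAddGroup.mk (lsmulAux R M N 1 y) = _
      congr 1
      induction y using TensorProduct.induction_on with
      | zero => simp
      | tmul m n => simp [lsmulAux]
      | add a b ha hb => simp only [map_add, ha, hb]
  mul_smul a b x := by
    induction x using QuotientAddGroup.induction_on with
    | H y =>
      show QuotientAddGroup.mk (lsmulAux R M N (a * b) y) =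
        QuotientAddGroup.mk (lsmulAux R M N a (lsmulAux R M N b y))
      congr 1
      induction y using TensorProduct.induction_on with
      | zero => simp
      | tmul m n => simp [lsmulAux, mul_smul]
      | add a' b' ha hb => simp only [map_add, ha, hb]
  smul_zero r := map_zero (QuotientAddGroup.map _ _ (lsmulAux R M N r) (lsmulAux_le R S M N r))
  smul_add r x y := map_add (QuotientAddGroup.map _ _ (lsmulAux R M N r) (lsmulAux_le R S M N r)) x y
  add_smul a b x := by
    induction x using QuotientAddGroup.induction_on with
    | H y =>
      show QuotientAddGroup.mk (lsmulAux R M N (a + b) y) =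
        QuotientAddGroup.mk (lsmulAux R M N a y) + QuotientAddGroup.mk (lsmulAux R M N b y)
      show _ = QuotientAddGroup.mk (lsmulAux R M N a y + lsmulAux R M N b y)
      congr 1
      induction y using TensorProduct.induction_on with
      | zero => simp
      | tmul m n => simp [lsmulAux, add_smul, TensorProduct.add_tmul]
      | add a' b' ha hb =>
        simp only [map_add, ha, hb]
        abel
  zero_smul x := by
    induction x using QuotientAddGroup.induction_on with
    | H y =>
      show QuotientAddGroup.mk (lsmulAux R M N (0 : R) y) = 0
      have : lsmulAux R M N (0 : R) y = 0 := by
        induction y using TensorProduct.induction_on with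
        | zero => simp
        | tmul m n => simp [lsmulAux]
        | add a' b' ha hb => simp only [map_add, ha, hb]; abel
      rw [this]
      rfl

theorem BalTensor.smul_tmul (r : R) (m : M) (n : N) :
    r • (BalTensor.tmul S M N m n) = BalTensor.tmul S M N (r • m) n := by
  show QuotientAddGroup.mk (lsmulAux R M N r (m ⊗ₜ[ℤ] n)) = _
  rw [BalTensor.tmul]
  congr 1

end LeftAction

section RightAction

variable (S T : Type*) [Ring S] [Ring T]
  (M : Type*) [AddCommGroup M] [Module Sᵐᵒᵖ M]
  (N : Type*) [AddCommGroup N] [Module S N] [Module Tᵐᵒᵖ N] [SMulCommClass S Tᵐᵒᵖ N]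

theorem rsmulAux_le (t : Tᵐᵒᵖ) :
    balRel S M N ≤ (balRel S M N).comap (rsmulAux T M N t) := by
  rw [balRel, AddSubgroup.closure_le]
  rintro x ⟨m, s, n, rfl⟩
  simp only [SetLike.mem_coe, AddSubgroup.mem_comap, map_sub]
  have h1 : rsmulAux T M N t ((op s • m) ⊗ₜ[ℤ] n) = (op s • m) ⊗ₜ[ℤ] (t • n) := by
    simp [rsmulAux, LinearMap.lTensor_tmul]
  have h2 : rsmulAux T M N t (m ⊗ₜ[ℤ] (s • n)) = m ⊗ₜ[ℤ] (s • (t • n)) := by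
    simp [rsmulAux, LinearMap.lTensor_tmul, smul_comm]
  rw [h1, h2]
  exact AddSubgroup.subset_closure ⟨m, s, t • n, rfl⟩

instance : SMul Tᵐᵒᵖ (BalTensor S M N) :=
  ⟨fun t => QuotientAddGroup.map _ _ (rsmulAux T M N t) (rsmulAux_le S T M N t)⟩

theorem BalTensor.rsmul_mk (t : Tᵐᵒᵖ) (x : M ⊗[ℤ] N) :
    t • (BalTensor.mk S M N x) = BalTensor.mk S M N (rsmulAux T M N t x) := rfl

instance : Module Tᵐᵒᵖ (BalTensor S M N) where
  smul t x := t • x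
  one_smul x := by
    induction x using QuotientAddGroup.induction_on with
    | H y =>
      show QuotientAddGroup.mk (rsmulAux T M N 1 y) = _
      congr 1
      induction y using TensorProduct.induction_on with
      | zero => simp
      | tmul m n => simp [rsmulAux]
      | add a b ha hb => simp only [map_add, ha, hb]
  mul_smul a b x := by
    induction x using QuotientAddGroup.induction_on with
    | H y =>
      show QuotientAddGroup.mk (rsmulAux T M N (a * b) y) =
        QuotientAddGroup.mk (rsmulAux T M N a (rsmulAux T M N b y))
      congr 1
      induction y using TensorProduct.induction_on with
      | zero => simp
      | tmul m n => simp [rsmulAux, mul_smul]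
      | add a' b' ha hb => simp only [map_add, ha, hb]
  smul_zero t := map_zero (QuotientAddGroup.map _ _ (rsmulAux T M N t) (rsmulAux_le S T M N t))
  smul_add t x y := map_add (QuotientAddGroup.map _ _ (rsmulAux T M N t) (rsmulAux_le S T M N t)) x y
  add_smul a b x := by
    induction x using QuotientAddGroup.induction_on with
    | H y =>
      show QuotientAddGroup.mk (rsmulAux T M N (a + b) y) =
        QuotientAddGroup.mk (rsmulAux T M N a y) + QuotientAddGroup.mk (rsmulAux T M N b y)
      show _ = QuotientAddGroup.mk (rsmulAux T M N a y + rsmulAux T M N b y)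
      congr 1
      induction y using TensorProduct.induction_on with
      | zero => simp
      | tmul m n => simp [rsmulAux, add_smul, TensorProduct.tmul_add]
      | add a' b' ha hb =>
        simp only [map_add, ha, hb]
        abel
  zero_smul x := by
    induction x using QuotientAddGroup.induction_on with
    | H y =>
      show QuotientAddGroup.mk (rsmulAux T M N (0 : Tᵐᵒᵖ) y) = 0
      have : rsmulAux T M N (0 : Tᵐᵒᵖ) y = 0 := by
        induction y using TensorProduct.induction_on with
        | zero => simp
        | tmul m n => simp [rsmulAux]
        | add a' b' ha hb => simp only [map_add, ha, hb]; abel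
      rw [this]
      rfl

theorem BalTensor.tmul_smul (t : Tᵐᵒᵖ) (m : M) (n : N) :
    t • (BalTensor.tmul S M N m n) = BalTensor.tmul S M N m (t • n) := by
  show QuotientAddGroup.mk (rsmulAux T M N t (m ⊗ₜ[ℤ] n)) = _
  rw [BalTensor.tmul]
  congr 1

end RightAction

section Bimodule

variable (R S T : Type*) [Ring R] [Ring S] [Ring T]
  (M : Type*) [AddCommGroup M] [Module R M] [Module Sᵐᵒᵖ M] [SMulCommClass R Sᵐᵒᵖ M]
  (N : Type*) [AddCommGroup N] [Module S N] [Module Tᵐᵒᵖ N] [SMulCommClass S Tᵐᵒᵖ N]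

instance : SMulCommClass R Tᵐᵒᵖ (BalTensor S M N) where
  smul_comm r t x := by
    induction x using QuotientAddGroup.induction_on with
    | H y =>
      show QuotientAddGroup.mk (lsmulAux R M N r (rsmulAux T M N t y)) =
        QuotientAddGroup.mk (rsmulAux T M N t (lsmulAux R M N r y))
      congr 1
      induction y using TensorProduct.induction_on with
      | zero => simp
      | tmul m n => simp [rsmulAux, lsmulAux]
      | add a b ha hb => simp only [map_add, ha, hb]

end Bimodule

end

end Paper

open Paper MulOpposite CategoryTheory

universe u

/-- Morita equivalence data for two rings `R` and `S`: an `(R,S)`-bimodule `M` and an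
`(S,R)`-bimodule `N` together with an isomorphism of `(R,R)`-bimodules `M ⊗[S] N ≅ R`
and an isomorphism of `(S,S)`-bimodules `N ⊗[R] M ≅ S`, where `R` and `S` carry their
canonical bimodule structures given by ring multiplication. -/
structure MoritaContext (R S : Type u) [Ring R] [Ring S] : Type (u + 1) where
  M : Type u
  N : Type u
  [addCommGroupM : AddCommGroup M]
  [modRM : Module R M]
  [modSopM : Module Sᵐᵒᵖ M]
  [smulCommM : SMulCommClass R Sᵐᵒᵖ M]
  [addCommGroupN : AddCommGroup N]
  [modSN : Module S N]
  [modRopN : Module Rᵐᵒᵖ N]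
  [smulCommN : SMulCommClass S Rᵐᵒᵖ N]
  eR : BalTensor S M N ≃+ R
  eR_left : ∀ (r : R) (x : BalTensor S M N), eR (r • x) = r * eR x
  eR_right : ∀ (r : R) (x : BalTensor S M N), eR (op r • x) = eR x * r
  eS : BalTensor R N M ≃+ S
  eS_left : ∀ (s : S) (x : BalTensor R N M), eS (s • x) = s * eS x
  eS_right : ∀ (s : S) (x : BalTensor R N M), eS (op s • x) = eS x * s

attribute [instance] MoritaContext.addCommGroupM MoritaContext.modRM
  MoritaContext.modSopM MoritaContext.smulCommM MoritaContext.addCommGroupN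
  MoritaContext.modSN MoritaContext.modRopN MoritaContext.smulCommN

namespace Paper.BalTensor

section Basic

variable {S : Type*} [Ring S] {M : Type*} [AddCommGroup M] [Module Sᵐᵒᵖ M]
  {N : Type*} [AddCommGroup N] [Module S N]

@[elab_as_elim]
theorem induction_on {motive : BalTensor S M N → Prop} (x : BalTensor S M N) (zero : motive 0)
    (tmul : ∀ m n, motive (BalTensor.tmul S M N m n))
    (add : ∀ x y, motive x → motive y → motive (x + y)) : motive x := by
  induction x using QuotientAddGroup.induction_on with
  | H y =>
    induction y using TensorProduct.induction_on with
    | zero => exact zero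
    | tmul m n => exact tmul m n
    | add y y' hy hy' => exact add _ _ hy hy'

theorem tmul_zero (m : M) : tmul S M N m 0 = 0 := by
  rw [tmul, TensorProduct.tmul_zero]; rfl

theorem add_tmul (m m' : M) (n : N) :
    tmul S M N (m + m') n = tmul S M N m n + tmul S M N m' n := by
  rw [tmul, TensorProduct.add_tmul]; rfl

theorem tmul_add (m : M) (n n' : N) :
    tmul S M N m (n + n') = tmul S M N m n + tmul S M N m n' := by
  rw [tmul, TensorProduct.tmul_add]; rfl

theorem op_smul_tmul (s : S) (m : M) (n : N) :
    tmul S M N (op s • m) n = tmul S M N m (s • n) :=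
  QuotientAddGroup.eq_iff_sub_mem.2 (AddSubgroup.subset_closure ⟨m, s, n, rfl⟩)

variable {A : Type*} [AddCommGroup A]

def lift (b : M →+ N →+ A) (hb : ∀ (s : S) (m : M) (n : N), b (op s • m) n = b m (s • n)) :
    BalTensor S M N →+ A :=
  QuotientAddGroup.lift _ (TensorProduct.liftAddHom b fun k m n => by simp) <| by
    refine (AddSubgroup.closure_le _).2 ?_
    rintro _ ⟨m, s, n, rfl⟩
    simp [hb]

@[ext]
theorem addHom_ext {f g : BalTensor S M N →+ A}
    (h : ∀ m n, f (tmul S M N m n) = g (tmul S M N m n)) : f = g := by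
  ext x
  induction x using induction_on with
  | zero => simp
  | tmul m n => exact h m n
  | add x y hx hy => simp [hx, hy]

end Basic

section Linear

variable {R S : Type*} [Ring R] [Ring S]
  {M : Type*} [AddCommGroup M] [Module R M] [Module Sᵐᵒᵖ M] [SMulCommClass R Sᵐᵒᵖ M]
  {N : Type*} [AddCommGroup N] [Module S N] {A : Type*} [AddCommGroup A]

/- The `SMul` instances on `BalTensor` are not syntactically those underlying its
`Module` instances, hence the `show … from smul_zero r` restatements below. -/
theorem apply_smul_eq_of_tmul (f g : BalTensor S M N →+ A) (r : R)
    (h : ∀ m n, f (tmul S M N (r • m) n) = g (tmul S M N m n)) (x : BalTensor S M N) :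
    f (r • x) = g x := by
  induction x using induction_on with
  | zero => rw [show r • (0 : BalTensor S M N) = 0 from smul_zero r, map_zero, map_zero]
  | tmul m n => rw [smul_tmul, h]
  | add x y hx hy =>
    rw [show r • (x + y) = r • x + r • y from smul_add r x y, map_add, map_add, hx, hy]

theorem apply_op_smul_eq_of_tmul {T : Type*} [Ring T] [Module Tᵐᵒᵖ N] [SMulCommClass S Tᵐᵒᵖ N]
    (f g : BalTensor S M N →+ A) (t : Tᵐᵒᵖ)
    (h : ∀ m n, f (tmul S M N m (t • n)) = g (tmul S M N m n)) (x : BalTensor S M N) :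
    f (t • x) = g x := by
  induction x using induction_on with
  | zero => rw [show t • (0 : BalTensor S M N) = 0 from smul_zero t, map_zero, map_zero]
  | tmul m n => rw [tmul_smul, h]
  | add x y hx hy =>
    rw [show t • (x + y) = t • x + t • y from smul_add t x y, map_add, map_add, hx, hy]

theorem map_smul_of_tmul [Module R A] (f : BalTensor S M N →+ A)
    (h : ∀ (r : R) m n, f (tmul S M N (r • m) n) = r • f (tmul S M N m n)) (r : R)
    (x : BalTensor S M N) : f (r • x) = r • f x :=
  apply_smul_eq_of_tmul f ((DistribSMul.toAddMonoidHom A r).comp f) r (h r) x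

def liftLinear [Module R A] (b : M →+ N →+ A)
    (hb : ∀ (s : S) (m : M) (n : N), b (op s • m) n = b m (s • n))
    (hr : ∀ (r : R) m n, b (r • m) n = r • b m n) : BalTensor S M N →ₗ[R] A :=
  { lift b hb with map_smul' := map_smul_of_tmul (lift b hb) hr }

theorem linearMap_ext [Module R A] {f g : BalTensor S M N →ₗ[R] A}
    (h : ∀ m n, f (tmul S M N m n) = g (tmul S M N m n)) : f = g :=
  LinearMap.toAddMonoidHom_injective (addHom_ext h)

variable (R S) in
def tmulRight (n : N) : M →ₗ[R] BalTensor S M N where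
  toFun m := tmul S M N m n
  map_add' m m' := add_tmul m m' n
  map_smul' r m := (smul_tmul R S M N r m n).symm

theorem tmulRight_add (n n' : N) :
    tmulRight R S (M := M) (n + n') = tmulRight R S n + tmulRight R S n' :=
  LinearMap.ext fun m => tmul_add m n n'

variable (R M) in
def lTensor {N' : Type*} [AddCommGroup N'] [Module S N'] (f : N →ₗ[S] N') :
    BalTensor S M N →ₗ[R] BalTensor S M N' :=
  liftLinear
    (AddMonoidHom.mk' (fun m => AddMonoidHom.mk' (fun n => tmul S M N' m (f n))
      fun n n' => by rw [map_add, tmul_add])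
      fun m m' => by ext n; exact add_tmul m m' (f n))
    (fun s m n => by simp [op_smul_tmul])
    (fun r m n => (smul_tmul R S M N' r m (f n)).symm)

theorem lTensor_add {N' : Type*} [AddCommGroup N'] [Module S N'] (f g : N →ₗ[S] N') :
    lTensor R M (f + g) = lTensor R M f + lTensor R M g :=
  linearMap_ext fun m n => tmul_add m (f n) (g n)

end Linear

theorem addHom_ext_tmul_tmul {R S : Type*} [Ring R] [Ring S] {M : Type*} [AddCommGroup M]
    [Module Sᵐᵒᵖ M] {N : Type*} [AddCommGroup N] [Module S N] [Module Rᵐᵒᵖ N]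
    [SMulCommClass S Rᵐᵒᵖ N] {X : Type*} [AddCommGroup X] [Module R X] {A : Type*}
    [AddCommGroup A] {f g : BalTensor S M (BalTensor R N X) →+ A}
    (h : ∀ m n x, f (tmul S M _ m (tmul R N X n x)) = g (tmul S M _ m (tmul R N X n x))) :
    f = g :=
  addHom_ext fun m z => by
    induction z using induction_on with
    | zero => rw [tmul_zero, map_zero, map_zero]
    | tmul n x => exact h m n x
    | add z z' hz hz' => rw [tmul_add, map_add, map_add, hz, hz']

section Functor

variable (R S : Type u) [Ring R] [Ring S]
  (N : Type u) [AddCommGroup N] [Module S N] [Module Rᵐᵒᵖ N] [SMulCommClass S Rᵐᵒᵖ N]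

def tensorLeft : ModuleCat.{u} R ⥤ ModuleCat.{u} S where
  obj X := ModuleCat.of S (BalTensor R N X)
  map f := ModuleCat.ofHom (lTensor S N f.hom)
  map_id X := by ext1; exact linearMap_ext fun _ _ => rfl
  map_comp f g := by ext1; exact linearMap_ext fun _ _ => rfl

instance : (tensorLeft R S N).Additive where
  map_add {X Y f g} := by ext1; exact linearMap_ext fun n x => tmul_add n (f x) (g x)

end Functor

end Paper.BalTensor

namespace MoritaContext

open BalTensor

variable {R S : Type u} [Ring R] [Ring S] (ctx : MoritaContext R S)

def symm : MoritaContext S R where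
  M := ctx.N
  N := ctx.M
  eR := ctx.eS
  eR_left := ctx.eS_left
  eR_right := ctx.eS_right
  eS := ctx.eR
  eS_left := ctx.eR_left
  eS_right := ctx.eR_right

theorem op_eR_smul (u v : BalTensor S ctx.M ctx.N) : op (ctx.eR v) • u = ctx.eR u • v :=
  ctx.eR.injective (by rw [ctx.eR_right, ctx.eR_left])

variable (X : ModuleCat.{u} R)

def cancelLeft (m : ctx.M) : BalTensor R ctx.N X →+ X :=
  lift (AddMonoidHom.mk' (fun n => DistribSMul.toAddMonoidHom X (ctx.eR (tmul S _ _ m n)))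
      fun n n' => by ext x; simp [tmul_add, add_smul])
    fun r n x => by simp [← tmul_smul, ctx.eR_right, mul_smul]

@[simp]
theorem cancelLeft_tmul (m : ctx.M) (n : ctx.N) (x : X) :
    ctx.cancelLeft X m (tmul R _ _ n x) = ctx.eR (tmul S _ _ m n) • x := rfl

theorem cancelLeft_smul (r : R) (m : ctx.M) :
    ctx.cancelLeft X (r • m) = (DistribSMul.toAddMonoidHom X r).comp (ctx.cancelLeft X m) := by
  ext n x
  rw [AddMonoidHom.comp_apply, cancelLeft_tmul, cancelLeft_tmul, ← smul_tmul, ctx.eR_left,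
    DistribSMul.toAddMonoidHom_apply, mul_smul]

def cancel : BalTensor S ctx.M (BalTensor R ctx.N X) →ₗ[R] X :=
  liftLinear
    (AddMonoidHom.mk' (ctx.cancelLeft X) fun m m' => by ext n x; simp [add_tmul, add_smul])
    (fun s m z => (apply_smul_eq_of_tmul (ctx.cancelLeft X m) (ctx.cancelLeft X (op s • m)) s
      (fun n x => by rw [cancelLeft_tmul, cancelLeft_tmul, op_smul_tmul]) z).symm)
    (fun r m z => DFunLike.congr_fun (ctx.cancelLeft_smul X r m) z)

def cancelInv : X →+ BalTensor S ctx.M (BalTensor R ctx.N X) :=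
  AddMonoidHom.mk' (fun x => lTensor R ctx.M (tmulRight S R x) (ctx.eR.symm 1)) fun x x' => by
    rw [tmulRight_add, lTensor_add, LinearMap.add_apply]

theorem cancel_lTensor_tmulRight (x : X) (w : BalTensor S ctx.M ctx.N) :
    ctx.cancel X (lTensor R ctx.M (tmulRight S R x) w) = ctx.eR w • x := by
  induction w using induction_on with
  | zero => rw [map_zero, map_zero, map_zero, zero_smul]
  | tmul m n => rfl
  | add w w' hw hw' => rw [map_add, map_add, hw, hw', map_add, add_smul]

theorem lTensor_tmulRight_smul (r : R) (x : X) (w : BalTensor S ctx.M ctx.N) :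
    lTensor R ctx.M (tmulRight S R (r • x)) w = lTensor R ctx.M (tmulRight S R x) (op r • w) :=
  (apply_op_smul_eq_of_tmul (lTensor R ctx.M (tmulRight S R x)).toAddMonoidHom
    (lTensor R ctx.M (tmulRight S R (r • x))).toAddMonoidHom (op r)
    (fun m n => congrArg (tmul S ctx.M _ m) (op_smul_tmul r n x)) w).symm

theorem cancelInv_cancel (z : BalTensor S ctx.M (BalTensor R ctx.N X)) :
    ctx.cancelInv X (ctx.cancel X z) = z := by
  suffices (ctx.cancelInv X).comp (ctx.cancel X).toAddMonoidHom = AddMonoidHom.id _ from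
    DFunLike.congr_fun this z
  refine addHom_ext_tmul_tmul fun m n x => ?_
  -- for `u = e⁻¹ 1`: `u ⊗ (e(m ⊗ n) • x) = (u • e(m ⊗ n)) ⊗ x = (e(u) • (m ⊗ n)) ⊗ x`
  show lTensor R ctx.M (tmulRight S R (ctx.eR (tmul S _ _ m n) • x)) (ctx.eR.symm 1) = _
  rw [lTensor_tmulRight_smul, op_eR_smul, AddEquiv.apply_symm_apply, smul_tmul, one_smul]
  rfl

theorem cancel_cancelInv (x : X) : ctx.cancel X (ctx.cancelInv X x) = x := by
  rw [cancelInv, AddMonoidHom.mk'_apply, cancel_lTensor_tmulRight, AddEquiv.apply_symm_apply,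
    one_smul]

def cancelEquiv : BalTensor S ctx.M (BalTensor R ctx.N X) ≃ₗ[R] X :=
  { ctx.cancel X with
    invFun := ctx.cancelInv X
    left_inv := ctx.cancelInv_cancel X
    right_inv := ctx.cancel_cancelInv X }

open CategoryTheory

theorem cancel_naturality {X Y : ModuleCat.{u} R} (f : X ⟶ Y) :
    (ctx.cancel Y).comp (lTensor R ctx.M (lTensor S ctx.N f.hom)) = f.hom.comp (ctx.cancel X) :=
  LinearMap.toAddMonoidHom_injective <| addHom_ext_tmul_tmul fun _ _ x =>
    (f.hom.map_smul _ x).symm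

def cancelIso : tensorLeft R S ctx.N ⋙ tensorLeft S R ctx.M ≅ 𝟭 (ModuleCat.{u} R) :=
  NatIso.ofComponents (fun X => (ctx.cancelEquiv X).toModuleIso) fun f =>
    ModuleCat.hom_ext (ctx.cancel_naturality f)

def equivalence : ModuleCat.{u} R ≌ ModuleCat.{u} S :=
  .mk (tensorLeft R S ctx.N) (tensorLeft S R ctx.M) ctx.cancelIso.symm ctx.symm.cancelIso

instance : ctx.equivalence.functor.Additive :=
  inferInstanceAs (tensorLeft R S ctx.N).Additive

end MoritaContext

namespace ModuleCat

variable {S : Type*} [Ring S]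

def toSpanSingleton {Y : ModuleCat S} (y : Y) : of S S ⟶ Y :=
  ofHom (LinearMap.toSpanSingleton S Y y)

def mulRight (s : S) : of S S ⟶ of S S :=
  ofHom (RingEquiv.moduleEndSelf S (op s))

@[simp]
theorem toSpanSingleton_apply {Y : ModuleCat S} (y : Y) (s : S) : toSpanSingleton y s = s • y :=
  rfl

@[simp]
theorem mulRight_apply (s t : S) : mulRight s t = t * s := rfl

theorem hom_ext_ring {Y : ModuleCat S} {f g : of S S ⟶ Y} (h : f (1 : S) = g (1 : S)) : f = g :=
  hom_ext (LinearMap.ext_ring h)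

theorem hom_ext_toSpanSingleton {Y Y' : ModuleCat S} {f g : Y ⟶ Y'}
    (h : ∀ y : Y, toSpanSingleton y ≫ f = toSpanSingleton y ≫ g) : f = g := by
  ext y
  have hy := congr($(h y) (1 : S))
  rwa [ConcreteCategory.comp_apply, ConcreteCategory.comp_apply, toSpanSingleton_apply, one_smul]
    at hy

theorem toSpanSingleton_add {Y : ModuleCat S} (y y' : Y) :
    toSpanSingleton (y + y') = toSpanSingleton y + toSpanSingleton y' :=
  hom_ext (LinearMap.toSpanSingleton_add y y')

theorem mulRight_comp_toSpanSingleton {Y : ModuleCat S} (s : S) (y : Y) :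
    mulRight s ≫ toSpanSingleton y = toSpanSingleton (s • y) :=
  hom_ext_ring (show (1 * s) • y = (1 : S) • s • y by rw [one_mul, one_smul])

theorem toSpanSingleton_comp {Y Y' : ModuleCat S} (y : Y) (f : Y ⟶ Y') :
    toSpanSingleton y ≫ f = toSpanSingleton (f y) :=
  hom_ext_ring (show f ((1 : S) • y) = (1 : S) • f y by rw [one_smul, one_smul])

end ModuleCat

namespace CategoryTheory.Functor

def mapEndRingHom {C D : Type*} [Category C] [Category D] [Preadditive C] [Preadditive D]
    (F : C ⥤ D) [F.Additive] (X : C) : End X →+* End (F.obj X) :=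
  { F.mapEnd X, F.mapAddHom with }

open BalTensor
open ModuleCat (toSpanSingleton mulRight)

variable {R S : Type u} [Ring R] [Ring S] (G : ModuleCat.{u} S ⥤ ModuleCat.{u} R) [G.Additive]

def rightActionRingHom : Sᵐᵒᵖ →+* Module.End R (G.obj (ModuleCat.of S S)) :=
  (ModuleCat.endRingEquiv _).toRingHom.comp <| (G.mapEndRingHom _).comp <|
    (ModuleCat.endRingEquiv _).symm.toRingHom.comp (RingEquiv.moduleEndSelf S).toRingHom

instance : Module Sᵐᵒᵖ (G.obj (ModuleCat.of S S)) :=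
  Module.compHom _ G.rightActionRingHom

instance : SMulCommClass R Sᵐᵒᵖ (G.obj (ModuleCat.of S S)) :=
  ⟨fun r s m => show r • G.rightActionRingHom s m = G.rightActionRingHom s (r • m) from
    ((G.rightActionRingHom s).map_smul r m).symm⟩

theorem op_smul_obj_self (s : S) (m : G.obj (ModuleCat.of S S)) :
    op s • m = G.map (mulRight s) m := rfl

theorem ofHom_tmulRight_smul (Y : ModuleCat.{u} S) (s : S) (y : Y) :
    ModuleCat.ofHom (tmulRight R S (M := G.obj (ModuleCat.of S S)) (s • y)) =
      G.map (mulRight s) ≫ ModuleCat.ofHom (tmulRight R S y) := by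
  ext m
  exact (op_smul_tmul s m y).symm

def tensorComparison (Y : ModuleCat.{u} S) :
    BalTensor S (G.obj (ModuleCat.of S S)) Y →ₗ[R] G.obj Y :=
  liftLinear
    (AddMonoidHom.mk' (fun m => AddMonoidHom.mk' (fun y => G.map (toSpanSingleton y) m)
        fun y y' => by rw [ModuleCat.toSpanSingleton_add, G.map_add]; rfl)
      fun m m' => by ext y; exact _root_.map_add (G.map (toSpanSingleton y)).hom m m')
    (fun s m y => by
      show G.map (toSpanSingleton y) (op s • m) = G.map (toSpanSingleton (s • y)) m
      rw [op_smul_obj_self, ← ConcreteCategory.comp_apply, ← G.map_comp,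
        ModuleCat.mulRight_comp_toSpanSingleton])
    (fun r m y => (G.map (toSpanSingleton y)).hom.map_smul r m)

theorem tmulRight_comp_tensorComparison {Y : ModuleCat.{u} S} (y : Y) :
    ModuleCat.ofHom (tmulRight R S y) ≫ ModuleCat.ofHom (G.tensorComparison Y) =
      G.map (toSpanSingleton y) :=
  rfl

theorem map_tensorComparison_tmul {Y Y' : ModuleCat.{u} S} (f : Y ⟶ Y')
    (m : G.obj (ModuleCat.of S S)) (y : Y) :
    G.map f (G.tensorComparison Y (tmul S _ _ m y)) =
      G.tensorComparison Y' (tmul S _ _ m (f y)) := by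
  show (G.map (toSpanSingleton y) ≫ G.map f) m = G.map (toSpanSingleton (f y)) m
  rw [← G.map_comp, ModuleCat.toSpanSingleton_comp]

end CategoryTheory.Functor

namespace CategoryTheory.Equivalence

open BalTensor
open ModuleCat (toSpanSingleton mulRight)

variable {R S : Type u} [Ring R] [Ring S] (e : ModuleCat.{u} R ≌ ModuleCat.{u} S)

theorem functor_map_inverse_map_mulRight_counitInv (s : S) :
    e.functor.map (e.inverse.map (mulRight s)) (e.counitInv.app (ModuleCat.of S S) (1 : S)) =
      s • e.counitInv.app (ModuleCat.of S S) (1 : S) := by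
  rw [← Functor.comp_map, ← ConcreteCategory.comp_apply, ← e.counitInv.naturality,
    ConcreteCategory.comp_apply, Functor.id_map, ModuleCat.mulRight_apply, one_mul, ← map_smul,
    smul_eq_mul, mul_one]

variable [e.functor.Additive]

instance : e.symm.functor.Additive := inferInstanceAs e.inverse.Additive

def toFunctorTensor (Y : ModuleCat.{u} S) :
    Y ⟶ e.functor.obj (ModuleCat.of R (BalTensor S (e.inverse.obj (ModuleCat.of S S)) Y)) :=
  ModuleCat.ofHom
    { toFun y := e.functor.map (ModuleCat.ofHom (tmulRight R S y)) (e.counitInv.app _ (1 : S))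
      map_add' y y' := by rw [tmulRight_add, ModuleCat.ofHom_add, e.functor.map_add]; rfl
      map_smul' s y := by
        rw [e.inverse.ofHom_tmulRight_smul, e.functor.map_comp, ConcreteCategory.comp_apply,
          functor_map_inverse_map_mulRight_counitInv, map_smul]
        rfl }

theorem toSpanSingleton_comp_toFunctorTensor {Y : ModuleCat.{u} S} (y : Y) :
    toSpanSingleton y ≫ e.toFunctorTensor Y =
      e.counitInv.app _ ≫ e.functor.map (ModuleCat.ofHom (tmulRight R S y)) :=
  ModuleCat.hom_ext_ring (by
    rw [ConcreteCategory.comp_apply, ConcreteCategory.comp_apply, ModuleCat.toSpanSingleton_apply,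
      one_smul]
    rfl)

theorem toFunctorTensor_comp_map_tensorComparison (Y : ModuleCat.{u} S) :
    e.toFunctorTensor Y ≫ e.functor.map (ModuleCat.ofHom (e.inverse.tensorComparison Y)) =
      e.counitInv.app Y :=
  ModuleCat.hom_ext_toSpanSingleton fun y => by
    rw [← Category.assoc, toSpanSingleton_comp_toFunctorTensor, Category.assoc,
      ← e.functor.map_comp, Functor.tmulRight_comp_tensorComparison]
    exact e.counitInv_naturality (toSpanSingleton y)

def tensorComparisonInv (Y : ModuleCat.{u} S) :
    e.inverse.obj Y ⟶ ModuleCat.of R (BalTensor S (e.inverse.obj (ModuleCat.of S S)) Y) :=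
  e.inverse.map (e.toFunctorTensor Y) ≫ e.unitInv.app _

theorem map_toSpanSingleton_comp_tensorComparisonInv {Y : ModuleCat.{u} S} (y : Y) :
    e.inverse.map (toSpanSingleton y) ≫ e.tensorComparisonInv Y =
      ModuleCat.ofHom (tmulRight R S y) := by
  rw [tensorComparisonInv, ← Functor.map_comp_assoc, toSpanSingleton_comp_toFunctorTensor,
    Functor.map_comp, Category.assoc, e.unitInv_naturality, e.inverse_counitInv_comp_assoc]

theorem tensorComparison_comp_tensorComparisonInv (Y : ModuleCat.{u} S) :
    ModuleCat.ofHom (e.inverse.tensorComparison Y) ≫ e.tensorComparisonInv Y = 𝟙 _ := by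
  ext1
  refine linearMap_ext fun m y => ?_
  exact ConcreteCategory.congr_hom (e.map_toSpanSingleton_comp_tensorComparisonInv y) m

theorem tensorComparisonInv_comp_tensorComparison (Y : ModuleCat.{u} S) :
    e.tensorComparisonInv Y ≫ ModuleCat.ofHom (e.inverse.tensorComparison Y) = 𝟙 _ := by
  rw [tensorComparisonInv, Category.assoc, ← e.unitInv_naturality, ← Functor.map_comp_assoc,
    toFunctorTensor_comp_map_tensorComparison, e.inverse_counitInv_comp]

def tensorComparisonIso (Y : ModuleCat.{u} S) :
    ModuleCat.of R (BalTensor S (e.inverse.obj (ModuleCat.of S S)) Y) ≅ e.inverse.obj Y where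
  hom := ModuleCat.ofHom (e.inverse.tensorComparison Y)
  inv := e.tensorComparisonInv Y
  hom_inv_id := e.tensorComparison_comp_tensorComparisonInv Y
  inv_hom_id := e.tensorComparisonInv_comp_tensorComparison Y

def tensorUnitEquiv :
    BalTensor S (e.inverse.obj (ModuleCat.of S S)) (e.functor.obj (ModuleCat.of R R)) ≃ₗ[R] R :=
  ((e.tensorComparisonIso _).trans (e.unitIso.app (ModuleCat.of R R)).symm).toLinearEquiv

theorem tensorComparison_op_smul (r : R)
    (x : BalTensor S (e.inverse.obj (ModuleCat.of S S)) (e.functor.obj (ModuleCat.of R R))) :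
    e.inverse.tensorComparison _ (MulOpposite.op r • x) =
      e.inverse.map (e.functor.map (mulRight r)) (e.inverse.tensorComparison _ x) :=
  apply_op_smul_eq_of_tmul (e.inverse.tensorComparison _).toAddMonoidHom
    ((e.inverse.map (e.functor.map (mulRight r))).hom.comp
      (e.inverse.tensorComparison _)).toAddMonoidHom (MulOpposite.op r)
    (fun m n => (e.inverse.map_tensorComparison_tmul (e.functor.map (mulRight r)) m n).symm) x

theorem tensorUnitEquiv_op_smul (r : R)
    (x : BalTensor S (e.inverse.obj (ModuleCat.of S S)) (e.functor.obj (ModuleCat.of R R))) :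
    e.tensorUnitEquiv (MulOpposite.op r • x) = e.tensorUnitEquiv x * r :=
  (congrArg (e.unitInv.app _) (e.tensorComparison_op_smul r x)).trans <|
    ConcreteCategory.congr_hom (e.unitInv_naturality (mulRight r)) (e.inverse.tensorComparison _ x)

end CategoryTheory.Equivalence

def MoritaContext.ofEquivalence {R S : Type u} [Ring R] [Ring S]
    (e : ModuleCat.{u} R ≌ ModuleCat.{u} S) [e.functor.Additive] : MoritaContext R S where
  M := e.inverse.obj (ModuleCat.of S S)
  N := e.functor.obj (ModuleCat.of R R)
  eR := e.tensorUnitEquiv.toAddEquiv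
  eR_left := e.tensorUnitEquiv.map_smul
  eR_right := e.tensorUnitEquiv_op_smul
  eS := e.symm.tensorUnitEquiv.toAddEquiv
  eS_left := e.symm.tensorUnitEquiv.map_smul
  eS_right := e.symm.tensorUnitEquiv_op_smul

/-- **Morita's theorem.** Two rings `R` and `S` are isomorphic objects in the
bicategory of rings and bimodules — i.e. there exist an `(R,S)`-bimodule `M` and an
`(S,R)`-bimodule `N` together with an `(R,R)`-bimodule isomorphism `M ⊗[S] N ≅ R` and an
`(S,S)`-bimodule isomorphism `N ⊗[R] M ≅ S` — if and only if there is an additive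
equivalence between the category of left `R`-modules and the category of left
`S`-modules. -/
theorem morita_theorem (R S : Type u) [Ring R] [Ring S] :
    Nonempty (MoritaContext R S) ↔
      ∃ e : ModuleCat.{u} R ≌ ModuleCat.{u} S, e.functor.Additive :=
  ⟨fun ⟨ctx⟩ => ⟨ctx.equivalence, inferInstance⟩, fun ⟨e, _⟩ => ⟨.ofEquivalence e⟩⟩
end

section
/- Let R and S be rings admitting an additive equivalence between their categories of left modules. Then for every ring T there is an additive equivalence between the category of (R,T)-bimodules with bimodule homomorphisms and the category of (S,T)-bimodules with bimodule homomorphisms; equivalently, the categories of left modules over R ⊗[ℤ] Tᵒᵖ and over S ⊗[ℤ] Tᵒᵖ are additively equivalent. -/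
/-!
An `(A ⊗[ℤ] B)`-module is the same thing as an `A`-module `M` together with a ring homomorphism
`B → End_A M`, i.e. an action of the monoid `B` on the object `M` of `ModuleCat A` that is
moreover additive in `B`. An equivalence `ModuleCat R ≌ ModuleCat S` transports actions of any
monoid, and an additive (hence, being faithful, additivity-reflecting) one transports exactly the
additive actions. Taking `B = Tᵐᵒᵖ` gives the equivalence of bimodule categories, which is
additive because every equivalence of preadditive categories with binary products is.
-/

open CategoryTheory
open scoped TensorProduct

universe u

namespace Algebra.TensorProduct

variable {R A B : Type*} [CommSemiring R] [Semiring A] [Algebra R A] [Semiring B] [Algebra R B]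
  {M : Type*} [AddCommMonoid M] [Module (A ⊗[R] B) M]

lemma tmul_smul_eq_smul_smul (a : A) (b : B) (m : M) :
    (a ⊗ₜ[R] b) • m = (a ⊗ₜ[R] (1 : B)) • ((1 : A) ⊗ₜ[R] b) • m := by
  rw [← mul_smul, tmul_mul_tmul, mul_one, one_mul]

lemma one_tmul_smul_comm (a : A) (b : B) (m : M) :
    ((1 : A) ⊗ₜ[R] b) • (a ⊗ₜ[R] (1 : B)) • m = (a ⊗ₜ[R] (1 : B)) • ((1 : A) ⊗ₜ[R] b) • m := by
  rw [← mul_smul, ← mul_smul, tmul_mul_tmul, tmul_mul_tmul, mul_one, one_mul, one_mul, mul_one]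

lemma one_tmul_mul_smul (b b' : B) (m : M) :
    ((1 : A) ⊗ₜ[R] (b * b')) • m = ((1 : A) ⊗ₜ[R] b) • ((1 : A) ⊗ₜ[R] b') • m := by
  rw [← mul_smul, tmul_mul_tmul, one_mul]

lemma map_smul_of_map_tmul_smul {N : Type*} [AddCommMonoid N] [Module (A ⊗[R] B) N]
    (f : M →+ N) (hf : ∀ (a : A) (b : B) (m : M), f ((a ⊗ₜ[R] b) • m) = (a ⊗ₜ[R] b) • f m)
    (x : A ⊗[R] B) (m : M) : f (x • m) = x • f m := by
  induction x using TensorProduct.induction_on with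
  | zero => rw [zero_smul, zero_smul, map_zero]
  | tmul a b => exact hf a b m
  | add x y hx hy => rw [add_smul, add_smul, map_add, hx, hy]

end Algebra.TensorProduct

namespace Action

variable (C : Type*) [Category C] [Preadditive C] (G : Type*) [Ring G]

def isAdditive : ObjectProperty (Action C G) :=
  fun X => ∀ g h : G, X.ρ (g + h) = X.ρ g + X.ρ h

variable {C G}

def ringHomEnd {X : Action C G} (hX : isAdditive C G X) : G →+* End X.V :=
  RingHom.mk' X.ρ hX

instance : (isAdditive C G).IsClosedUnderIsomorphisms where
  of_iso {X Y} i hX g h := by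
    have conj : ∀ g, Y.ρ g = i.inv.hom ≫ X.ρ g ≫ i.hom.hom := fun g => by
      rw [i.hom.comm, inv_hom_hom_assoc]
    rw [conj, conj, conj, hX g h, Preadditive.add_comp, Preadditive.comp_add]

lemma isAdditive_mapAction_obj_iff {D : Type*} [Category D] [Preadditive D]
    (F : C ⥤ D) [F.Additive] [F.Faithful] (X : Action C G) :
    isAdditive D G ((F.mapAction G).obj X) ↔ isAdditive C G X := by
  refine forall₂_congr fun g h => ?_
  -- the sum is taken in `End`, which `Functor.map_add` does not see through
  change (F.map (X.ρ (g + h)) : F.obj X.V ⟶ F.obj X.V) = F.map (X.ρ g) + F.map (X.ρ h) ↔ _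
  rw [← F.map_add]
  exact F.map_injective.eq_iff

end Action

namespace CategoryTheory.Equivalence

variable {C D : Type*} [Category C] [Category D] [Preadditive C] [Preadditive D]

def mapAdditiveAction (e : C ≌ D) [e.functor.Additive] (G : Type*) [Ring G] :
    (Action.isAdditive C G).FullSubcategory ≌ (Action.isAdditive D G).FullSubcategory :=
  (e.mapAction G).congrFullSubcategory <| by
    ext X
    exact Action.isAdditive_mapAction_obj_iff e.functor X

end CategoryTheory.Equivalence

namespace ModuleCat

universe v u₁ u₂

open Algebra.TensorProduct

section

variable {A : Type u₁} {B : Type u₂} [Ring A] [Ring B]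

variable (A) in
noncomputable abbrev restrictScalarsLeft : ModuleCat.{v} (A ⊗[ℤ] B) ⥤ ModuleCat.{v} A :=
  restrictScalars includeLeftRingHom

noncomputable def smulRightEnd (M : ModuleCat.{v} (A ⊗[ℤ] B)) :
    B →* End ((restrictScalarsLeft A).obj M) where
  toFun b := ofHom (X := (restrictScalarsLeft A).obj M) (Y := (restrictScalarsLeft A).obj M)
    { toFun m := ((1 : A) ⊗ₜ[ℤ] b) • (m : M)
      map_add' := smul_add _
      map_smul' a m := one_tmul_smul_comm a b (M := M) m }
  map_one' := hom_ext (LinearMap.ext fun m => one_smul (A ⊗[ℤ] B) (m : M))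
  map_mul' b b' := hom_ext (LinearMap.ext fun m => one_tmul_mul_smul b b' (M := M) m)

variable (A B) in
noncomputable def tensorToAction : ModuleCat.{v} (A ⊗[ℤ] B) ⥤ Action (ModuleCat.{v} A) B where
  obj M := ⟨(restrictScalarsLeft A).obj M, smulRightEnd M⟩
  map f :=
    { hom := (restrictScalarsLeft A).map f
      comm b := hom_ext <| LinearMap.ext fun m => f.hom.map_smul ((1 : A) ⊗ₜ[ℤ] b) m }

instance : (tensorToAction.{v} A B).Faithful where
  map_injective h := (restrictScalarsLeft A).map_injective (congrArg Action.Hom.hom h)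

instance : (tensorToAction.{v} A B).Full where
  map_surjective {M N} φ := by
    let f : M →+ N := φ.hom.hom.toAddMonoidHom
    have hf (a : A) (b : B) (m : M) : f ((a ⊗ₜ[ℤ] b) • m) = (a ⊗ₜ[ℤ] b) • f m := by
      rw [tmul_smul_eq_smul_smul a b m, tmul_smul_eq_smul_smul a b (f m)]
      exact (φ.hom.hom.map_smul a _).trans
        (congrArg _ (ConcreteCategory.congr_hom (φ.comm b) m))
    exact ⟨ofHom { f with map_smul' := map_smul_of_map_tmul_smul f hf }, rfl⟩

lemma tensorToAction_obj_isAdditive (M : ModuleCat.{v} (A ⊗[ℤ] B)) :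
    Action.isAdditive _ B ((tensorToAction A B).obj M) := fun b b' =>
  hom_ext <| LinearMap.ext fun m => by
    show ((1 : A) ⊗ₜ[ℤ] (b + b')) • (show M from m) =
      ((1 : A) ⊗ₜ[ℤ] b) • (show M from m) + ((1 : A) ⊗ₜ[ℤ] b') • (show M from m)
    rw [TensorProduct.tmul_add, add_smul]

noncomputable def ofAdditiveAction (X : Action (ModuleCat.{v} A) B)
    (hX : Action.isAdditive _ B X) : ModuleCat.{v} (A ⊗[ℤ] B) :=
  letI : Module B X.V :=
    Module.compHom X.V ((endRingEquiv X.V).toRingHom.comp (Action.ringHomEnd hX))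
  haveI : SMulCommClass A B X.V := ⟨fun a b x => ((X.ρ b).hom.map_smul a x).symm⟩
  letI : Module (A ⊗[ℤ] B) X.V := TensorProduct.Algebra.module
  of (A ⊗[ℤ] B) X.V

noncomputable def tensorToActionObjOfAdditiveActionIso (X : Action (ModuleCat.{v} A) B)
    (hX : Action.isAdditive _ B X) : (tensorToAction A B).obj (ofAdditiveAction X hX) ≅ X :=
  Action.mkIso
    (LinearEquiv.toModuleIso
      { toFun x := x
        invFun x := x
        map_add' _ _ := rfl
        map_smul' a x := congrArg (a • ·) (congrArg (fun f : End X.V => f.hom x) X.ρ.map_one)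
        left_inv _ := rfl
        right_inv _ := rfl : ((tensorToAction A B).obj (ofAdditiveAction X hX)).V ≃ₗ[A] X.V })
    fun b => hom_ext <| LinearMap.ext fun x => one_smul A ((X.ρ b).hom x)

lemma essImage_tensorToAction :
    (tensorToAction.{v} A B).essImage = Action.isAdditive _ B := by
  ext X
  exact ⟨fun ⟨M, ⟨i⟩⟩ => (Action.isAdditive _ B).prop_of_iso i (tensorToAction_obj_isAdditive M),
    fun hX => ⟨ofAdditiveAction X hX, ⟨tensorToActionObjOfAdditiveActionIso X hX⟩⟩⟩

end

variable (A : Type u₁) (B : Type u₂) [Ring A] [Ring B]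

noncomputable def tensorEquivAdditiveAction :
    ModuleCat.{v} (A ⊗[ℤ] B) ≌ (Action.isAdditive (ModuleCat.{v} A) B).FullSubcategory :=
  (tensorToAction A B).toEssImage.asEquivalence.trans
    (ObjectProperty.fullSubcategoryCongr essImage_tensorToAction)

end ModuleCat

/-- Let `R` and `S` be rings admitting an additive equivalence between
their categories of left modules. Then for every ring `T` there is an additive equivalence
between the category of `(R,T)`-bimodules and the category of `(S,T)`-bimodules;
equivalently (an `(R,T)`-bimodule being the same thing as a left module over the ring
`R ⊗[ℤ] Tᵒᵖ`), the categories of left modules over `R ⊗[ℤ] Tᵒᵖ` and over `S ⊗[ℤ] Tᵒᵖ`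
are additively equivalent. -/
theorem module_equivalence_fibered
    (R S : Type u) [Ring R] [Ring S]
    (h : ∃ e : ModuleCat.{u} R ≌ ModuleCat.{u} S, e.functor.Additive) :
    ∀ (T : Type u) [Ring T],
      ∃ e : ModuleCat.{u} (R ⊗[ℤ] Tᵐᵒᵖ) ≌ ModuleCat.{u} (S ⊗[ℤ] Tᵐᵒᵖ),
        e.functor.Additive := by
  obtain ⟨e, he⟩ := h
  intro T _
  let E := (ModuleCat.tensorEquivAdditiveAction R Tᵐᵒᵖ).trans
    ((e.mapAdditiveAction Tᵐᵒᵖ).trans (ModuleCat.tensorEquivAdditiveAction S Tᵐᵒᵖ).symm)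
  exact ⟨E, E.functor.additive_of_preserves_binary_products⟩
end
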